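/- arXiv:2402.10029 — 7 statements merged into one kernel-verified Lean document; each statement's English description precedes it below -/
import Mathlib

section
/- Let Λ be the set of ∃ₙ-sentences (or ∀ₙ-sentences) of a first-order language L, let A be a set of L-sentences and φ an L-sentence such that A does not prove φ ↔ ψ for any sentence ψ equivalent to the negation of a sentence in Λ. Then the theory A ∪ {φ} ∪ (Λ-consequences of A ∪ {¬φ}) is consistent. -/
open FirstOrder FirstOrder.Language

/-- `QHier b k φ`: `φ` is a `∃ₖ`-formula (if `b = true`) or a `∀ₖ`-formula (if `b = false`),
i.e. a prenex formula with at most `k` alternating quantifier blocks, beginning with `∃`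
(resp. `∀`). -/
inductive QHier {L : FirstOrder.Language} {α : Type} : Bool → ℕ → {n : ℕ} → L.BoundedFormula α n → Prop
  | qf {b k n} {φ : L.BoundedFormula α n} : φ.IsQF → QHier b k φ
  | ex {k n} {φ : L.BoundedFormula α (n + 1)} : QHier true (k + 1) φ → QHier true (k + 1) φ.ex
  | all {k n} {φ : L.BoundedFormula α (n + 1)} : QHier false (k + 1) φ → QHier false (k + 1) φ.all
  | dual {b k n} {φ : L.BoundedFormula α n} : QHier (!b) k φ → QHier b (k + 1) φ

/-- The set of `∃ₖ`-sentences of `L`. -/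
def ExSet (L : FirstOrder.Language) (k : ℕ) : Set L.Sentence := {φ | QHier true k φ}
/-- The set of `∀ₖ`-sentences of `L`. -/
def AllSet (L : FirstOrder.Language) (k : ℕ) : Set L.Sentence := {φ | QHier false k φ}

/-- A level-sentence set: the set of `∃ₖ`- or of `∀ₖ`-sentences for some `k`. -/
def IsLevelSet {L : FirstOrder.Language} (Λ : Set L.Sentence) : Prop :=
  ∃ k, Λ = ExSet L k ∨ Λ = AllSet L k

/-- `¬Λ`: the set of sentences (logically) equivalent to the negation of a sentence in `Λ`. -/
def NegOf {L : FirstOrder.Language} (Λ : Set L.Sentence) : Set L.Sentence :=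
  {ψ | ∃ χ ∈ Λ, (∅ : L.Theory) ⊨ᵇ ψ.iff χ.not}

/-- `Th_Λ(S)`: the set of `Λ`-sentences provable from (equivalently, entailed by) `S`. -/
def ThL {L : FirstOrder.Language} (Λ : Set L.Sentence) (S : L.Theory) : Set L.Sentence :=
  {ψ ∈ Λ | S ⊨ᵇ ψ}


section Aux
open FirstOrder.Language.BoundedFormula

universe u v w

variable {L : FirstOrder.Language.{u, v}} {α : Type}

theorem qhier_castLE {b k n} {φ : L.BoundedFormula α n} (hq : QHier b k φ) :
    ∀ {n'} (h : n ≤ n'), QHier b k (φ.castLE h) := by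
  induction hq with
  | qf h' => exact fun h => .qf (h'.castLE)
  | ex _ ih => exact fun h => .ex (ih _)
  | all _ ih => exact fun h => .all (ih _)
  | dual _ ih => exact fun h => .dual (ih h)

theorem qhier_liftAt {b k n} {φ : L.BoundedFormula α n} (hq : QHier b k φ) (n' m : ℕ) :
    QHier b k (φ.liftAt n' m) := by
  induction hq with
  | qf h' => exact .qf h'.liftAt
  | ex _ ih => exact .ex (qhier_castLE ih _)
  | all _ ih => exact .all (qhier_castLE ih _)
  | dual _ ih => exact .dual ih

/-- The target equivalence: `χ` is equivalent to `φ ⊓ ψ` in every structure. -/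
def Eqv3 {n : ℕ} (χ φ ψ : L.BoundedFormula α n) : Prop :=
  ∀ (M : Type w) [L.Structure M] [Nonempty M] (v : α → M) (xs : Fin n → M),
    χ.Realize v xs ↔ (φ.Realize v xs ∧ ψ.Realize v xs)

theorem snoc_comp_castSucc {n : ℕ} {M : Type w} (xs : Fin n → M) (a : M) :
    (Fin.snoc xs a : Fin (n+1) → M) ∘ Fin.castSucc = xs := by
  funext i; simp

theorem conjQF {b : Bool} {k n : ℕ} {φ ψ : L.BoundedFormula α n} (hφ : φ.IsQF)
    (hψ : QHier b k ψ) : ∃ χ, QHier b k χ ∧ Eqv3.{u,v,w} χ φ ψ := by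
  induction hψ with
  | @qf b k n ψ hq =>
    exact ⟨φ ⊓ ψ, .qf ((hφ.imp hq.not).not), fun M _ _ v xs => realize_inf⟩
  | @ex k n ψ' _ ih =>
    obtain ⟨χ', hχ', he⟩ := ih (φ := φ.liftAt 1 n) hφ.liftAt
    have key : ∀ (M : Type w) [L.Structure M] [Nonempty M] (v : α → M) (xs : Fin n → M) (a : M),
        χ'.Realize v (Fin.snoc xs a) ↔ (φ.Realize v xs ∧ ψ'.Realize v (Fin.snoc xs a)) := by
      intro M _ _ v xs a
      rw [he M v (Fin.snoc xs a), realize_liftAt_one_self, snoc_comp_castSucc]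
    refine ⟨χ'.ex, .ex hχ', fun M _ _ v xs => ?_⟩
    simp only [realize_ex, key, exists_and_left]
  | @all k n ψ' _ ih =>
    obtain ⟨χ', hχ', he⟩ := ih (φ := φ.liftAt 1 n) hφ.liftAt
    have key : ∀ (M : Type w) [L.Structure M] [Nonempty M] (v : α → M) (xs : Fin n → M) (a : M),
        χ'.Realize v (Fin.snoc xs a) ↔ (φ.Realize v xs ∧ ψ'.Realize v (Fin.snoc xs a)) := by
      intro M _ _ v xs a
      rw [he M v (Fin.snoc xs a), realize_liftAt_one_self, snoc_comp_castSucc]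
    refine ⟨χ'.all, .all hχ', fun M _ _ v xs => ?_⟩
    simp only [realize_all, key]
    exact ⟨fun h => ⟨(h (Classical.arbitrary M)).1, fun a => (h a).2⟩, fun h a => ⟨h.1, h.2 a⟩⟩
  | @dual b k n ψ _ ih =>
    obtain ⟨χ', hχ', he⟩ := ih hφ
    exact ⟨χ', .dual hχ', he⟩

theorem conjDual (k : ℕ)
    (hrec : ∀ {b : Bool} {n : ℕ} {φ ψ : L.BoundedFormula α n}, QHier b k φ → QHier b k ψ →
      ∃ χ, QHier b k χ ∧ Eqv3.{u,v,w} χ φ ψ)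
    {b : Bool} {k' n : ℕ} {φ ψ : L.BoundedFormula α n} (hk : k' = k + 1)
    (hφ : QHier (!b) k φ) (hψ : QHier b k' ψ) :
    ∃ χ, QHier b k' χ ∧ Eqv3.{u,v,w} χ φ ψ := by
  induction hψ with
  | @qf b2 k2 n2 ψ hq =>
    subst hk
    obtain ⟨χ, hχ, he⟩ := conjQF hq (QHier.dual hφ)
    exact ⟨χ, hχ, fun M _ _ v xs => (he M v xs).trans and_comm⟩
  | @ex k2 n2 ψ' _ ih =>
    obtain ⟨χ', hχ', he⟩ := ih hk (qhier_liftAt hφ 1 n2)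
    have key : ∀ (M : Type w) [L.Structure M] [Nonempty M] (v : α → M) (xs : Fin n2 → M) (a : M),
        χ'.Realize v (Fin.snoc xs a) ↔ (φ.Realize v xs ∧ ψ'.Realize v (Fin.snoc xs a)) := by
      intro M _ _ v xs a
      rw [he M v (Fin.snoc xs a), realize_liftAt_one_self, snoc_comp_castSucc]
    refine ⟨χ'.ex, .ex hχ', fun M _ _ v xs => ?_⟩
    simp only [realize_ex, key, exists_and_left]
  | @all k2 n2 ψ' _ ih =>
    obtain ⟨χ', hχ', he⟩ := ih hk (qhier_liftAt hφ 1 n2)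
    have key : ∀ (M : Type w) [L.Structure M] [Nonempty M] (v : α → M) (xs : Fin n2 → M) (a : M),
        χ'.Realize v (Fin.snoc xs a) ↔ (φ.Realize v xs ∧ ψ'.Realize v (Fin.snoc xs a)) := by
      intro M _ _ v xs a
      rw [he M v (Fin.snoc xs a), realize_liftAt_one_self, snoc_comp_castSucc]
    refine ⟨χ'.all, .all hχ', fun M _ _ v xs => ?_⟩
    simp only [realize_all, key]
    exact ⟨fun h => ⟨(h (Classical.arbitrary M)).1, fun a => (h a).2⟩, fun h a => ⟨h.1, h.2 a⟩⟩
  | @dual b2 k2 n2 ψ hψ2 _ =>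
    have hk2 : k2 = k := by omega
    subst hk2
    obtain ⟨χ, hχ, he⟩ := hrec hφ hψ2
    exact ⟨χ, .dual hχ, he⟩

theorem conjSucc (k : ℕ)
    (hrec : ∀ {b : Bool} {n : ℕ} {φ ψ : L.BoundedFormula α n}, QHier b k φ → QHier b k ψ →
      ∃ χ, QHier b k χ ∧ Eqv3.{u,v,w} χ φ ψ)
    {b : Bool} {k' n : ℕ} {φ ψ : L.BoundedFormula α n} (hk : k' = k + 1)
    (hφ : QHier b k' φ) (hψ : QHier b k' ψ) :
    ∃ χ, QHier b k' χ ∧ Eqv3.{u,v,w} χ φ ψ := by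
  induction hφ with
  | qf h => exact conjQF h hψ
  | @ex k2 n2 φ' _ ih =>
    obtain ⟨χ', hχ', he⟩ := ih hk (qhier_liftAt hψ 1 n2)
    have key : ∀ (M : Type w) [L.Structure M] [Nonempty M] (v : α → M) (xs : Fin n2 → M) (a : M),
        χ'.Realize v (Fin.snoc xs a) ↔ (φ'.Realize v (Fin.snoc xs a) ∧ ψ.Realize v xs) := by
      intro M _ _ v xs a
      rw [he M v (Fin.snoc xs a), realize_liftAt_one_self, snoc_comp_castSucc]
    refine ⟨χ'.ex, .ex hχ', fun M _ _ v xs => ?_⟩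
    simp only [realize_ex, key, exists_and_right]
  | @all k2 n2 φ' _ ih =>
    obtain ⟨χ', hχ', he⟩ := ih hk (qhier_liftAt hψ 1 n2)
    have key : ∀ (M : Type w) [L.Structure M] [Nonempty M] (v : α → M) (xs : Fin n2 → M) (a : M),
        χ'.Realize v (Fin.snoc xs a) ↔ (φ'.Realize v (Fin.snoc xs a) ∧ ψ.Realize v xs) := by
      intro M _ _ v xs a
      rw [he M v (Fin.snoc xs a), realize_liftAt_one_self, snoc_comp_castSucc]
    refine ⟨χ'.all, .all hχ', fun M _ _ v xs => ?_⟩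
    simp only [realize_all, key]
    exact ⟨fun h => ⟨fun a => (h a).1, (h (Classical.arbitrary M)).2⟩, fun h a => ⟨h.1 a, h.2⟩⟩
  | @dual b2 k2 n2 φ2 hφ2 _ =>
    have hk2 : k2 = k := by omega
    subst hk2
    exact conjDual _ @hrec hk hφ2 hψ

theorem conjAux : ∀ (k : ℕ) {b : Bool} {n : ℕ} {φ ψ : L.BoundedFormula α n},
    QHier b k φ → QHier b k ψ → ∃ χ, QHier b k χ ∧ Eqv3.{u,v,w} χ φ ψ := by
  intro k
  induction k with
  | zero =>
    intro b n φ ψ hφ hψ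
    cases hφ with
    | qf h => exact conjQF h hψ
  | succ k IH =>
    intro b n φ ψ hφ hψ
    exact conjSucc k @IH rfl hφ hψ

theorem conjFinset (b : Bool) (k : ℕ) (Ψ : Finset L.Sentence)
    (h : ∀ ψ ∈ Ψ, QHier b k ψ) :
    ∃ χ : L.Sentence, QHier b k χ ∧
      ∀ (M : Type w) [L.Structure M] [Nonempty M], (M ⊨ χ ↔ ∀ ψ ∈ Ψ, M ⊨ ψ) := by
  classical
  induction Ψ using Finset.induction_on with
  | empty =>
    refine ⟨⊤, .qf isQF_bot.not, fun M _ _ => ?_⟩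
    simp [Sentence.Realize]
  | @insert ψ s hψs ih =>
    obtain ⟨χ', hχ', he'⟩ := ih (fun ψ' h' => h ψ' (Finset.mem_insert_of_mem h'))
    obtain ⟨χ, hχ, he⟩ := conjAux.{u,v,w} k (h ψ (Finset.mem_insert_self ψ s)) hχ'
    refine ⟨χ, hχ, fun M _ _ => ?_⟩
    simp only [Finset.forall_mem_insert]
    exact (he M default default).trans (and_congr Iff.rfl (he' M))

theorem keyLemma {L : FirstOrder.Language.{u,v}} (b : Bool) (k : ℕ) (A : L.Theory)
    (φ : L.Sentence)
    (hφ : ∀ ψ ∈ NegOf {χ : L.Sentence | QHier b k χ}, ¬ A ⊨ᵇ (φ.iff ψ)) :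
    (A ∪ {φ} ∪ ThL {χ : L.Sentence | QHier b k χ} (A ∪ {φ.not})).IsSatisfiable := by
  classical
  by_contra hsat
  rw [Theory.isSatisfiable_iff_isFinitelySatisfiable, Theory.IsFinitelySatisfiable] at hsat
  push_neg at hsat
  obtain ⟨T0, hT0sub, hT0⟩ := hsat
  set Λ : Set L.Sentence := {χ : L.Sentence | QHier b k χ} with hΛdef
  set Ψ : Finset L.Sentence := T0.filter (fun ψ => ψ ∈ ThL Λ (A ∪ {φ.not})) with hΨdef
  have hΨQ : ∀ ψ ∈ Ψ, QHier b k ψ := fun ψ hψ => (Finset.mem_filter.mp hψ).2.1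
  obtain ⟨χ, hχ, he⟩ := conjFinset.{u,v,max u v} b k Ψ hΨQ
  have hsub : (T0 : L.Theory) ⊆ A ∪ {φ} ∪ (Ψ : L.Theory) := by
    intro x hx
    by_cases hmem : x ∈ ThL Λ (A ∪ {φ.not})
    · exact Or.inr (Finset.mem_coe.mpr (Finset.mem_filter.mpr ⟨hx, hmem⟩))
    · rcases hT0sub hx with h | h
      · exact Or.inl h
      · exact absurd h hmem
  have hunsat : ¬ (A ∪ {φ} ∪ (Ψ : L.Theory)).IsSatisfiable := fun h => hT0 (h.mono hsub)
  have hiff : A ⊨ᵇ (φ.iff χ.not) := by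
    intro M v xs
    have hv : v = default := funext fun a => a.elim
    have hxs : xs = default := funext fun a => a.elim0
    subst hv hxs
    rw [BoundedFormula.realize_iff, BoundedFormula.realize_not]
    show (M ⊨ φ) ↔ ¬ (M ⊨ χ)
    constructor
    · intro hMφ hMχ
      have hall : ∀ ψ ∈ (A ∪ {φ} ∪ (Ψ : L.Theory)), (M : Type (max u v)) ⊨ ψ := by
        rintro ψ ((h | h) | h)
        · exact A.realize_sentence_of_mem h
        · rw [Set.mem_singleton_iff.mp h]; exact hMφ
        · exact (he M).mp hMχ ψ (Finset.mem_coe.mp h)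
      haveI : (M : Type (max u v)) ⊨ (A ∪ {φ} ∪ (Ψ : L.Theory)) := ⟨hall⟩
      exact hunsat (Theory.Model.isSatisfiable M)
    · intro hMχ
      by_contra hMφ
      haveI : (M : Type (max u v)) ⊨ (A ∪ {φ.not} : L.Theory) := by
        refine ⟨fun ψ hψ => ?_⟩
        rcases hψ with h | h
        · exact A.realize_sentence_of_mem h
        · rw [Set.mem_singleton_iff.mp h]
          rw [Sentence.realize_not]
          exact hMφ
      apply hMχ
      refine (he M).mpr fun ψ hψ => ?_
      exact ((Finset.mem_filter.mp hψ).2.2).realize_sentence M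
  exact hφ χ.not ⟨χ, hχ, fun M v xs => by rw [BoundedFormula.realize_iff]⟩ hiff

end Aux

/-- If `A ⊬ φ ↔ ψ` for every `ψ ∈ ¬Λ`, then `A ∪ {φ} ∪ Th_Λ(A ∪ {¬φ})` is consistent. -/

theorem statement0 {L : FirstOrder.Language} (Λ : Set L.Sentence) (A : L.Theory) (φ : L.Sentence)
    (hΛ : IsLevelSet Λ) (hφ : ∀ ψ ∈ NegOf Λ, ¬ A ⊨ᵇ (φ.iff ψ)) :
    (A ∪ {φ} ∪ ThL Λ (A ∪ {φ.not})).IsSatisfiable := by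
  obtain ⟨k, hk | hk⟩ := hΛ
  · subst hk; exact keyLemma true k A φ hφ
  · subst hk; exact keyLemma false k A φ hφ
end

section
/- Let Λ be a level-sentence set, A a set of sentences, and φ a sentence with A ⊬ φ ↔ ψ for all ψ ∈ ¬Λ. If T is any theory consistent with A ∪ {φ} ∪ Th_Λ(A ∪ {¬φ}), then there exist complete consistent theories T⁺ ⊇ T ∪ A ∪ {φ} and T⁻ ⊇ A ∪ {¬φ} with Λ ∩ T⁻ ⊆ Λ ∩ T⁺. -/
open FirstOrder FirstOrder.Language

/-! Let `M` be a model of `T ∪ A ∪ {φ} ∪ Th_Λ(A ∪ {¬φ})` and take `T⁺ = Th(M)`. For `T⁻` take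
the theory of a model of `A ∪ {¬φ} ∪ {¬ψ | ψ ∈ Λ, M ⊭ ψ}`; any `Λ`-sentence true there is then true
in `M`. That set is satisfiable by compactness: a level set is closed under finite disjunctions up
to equivalence (disjuncts of prenex formulas can share their quantifier blocks), and a disjunction
of `Λ`-sentences false in `M` is a `Λ`-sentence not in `Th_Λ(A ∪ {¬φ})`, so some model of
`A ∪ {¬φ}` falsifies all its disjuncts. -/

namespace FirstOrder.Language

variable {L : FirstOrder.Language} {α : Type} {T : L.Theory} {n : ℕ}

open BoundedFormula

theorem Theory.sup_comm_iff (φ ψ : L.BoundedFormula α n) : φ ⊔ ψ ⇔[T] ψ ⊔ φ :=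
  fun M v xs => by simp [or_comm]

theorem Theory.ex_sup_liftAt_iff (φ : L.BoundedFormula α (n + 1)) (ψ : L.BoundedFormula α n) :
    (φ ⊔ ψ.liftAt 1 n).ex ⇔[T] φ.ex ⊔ ψ :=
  fun M v xs => by simp [realize_liftAt_one_self, exists_or]

theorem Theory.all_sup_liftAt_iff (φ : L.BoundedFormula α (n + 1)) (ψ : L.BoundedFormula α n) :
    (φ ⊔ ψ.liftAt 1 n).all ⇔[T] φ.all ⊔ ψ :=
  fun M v xs => by simp [realize_liftAt_one_self, forall_or_right]

theorem BoundedFormula.liftAt_all (φ : L.BoundedFormula α (n + 1)) (m : ℕ) :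
    φ.all.liftAt 1 m = (φ.liftAt 1 m).all := by
  simp only [liftAt, mapTermRel, castLE_rfl]

theorem BoundedFormula.liftAt_ex (φ : L.BoundedFormula α (n + 1)) (m : ℕ) :
    φ.ex.liftAt 1 m = (φ.liftAt 1 m).ex :=
  congrArg BoundedFormula.not (liftAt_all φ.not m)

end FirstOrder.Language

namespace QHier

variable {L : FirstOrder.Language} {α : Type}

open BoundedFormula

theorem liftAt {b : Bool} {k n : ℕ} {φ : L.BoundedFormula α n} (h : QHier b k φ) (m : ℕ) :
    QHier b k (φ.liftAt 1 m) := by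
  induction h with
  | qf h => exact .qf h.liftAt
  | ex _ ih => rw [liftAt_ex]; exact .ex ih
  | all _ ih => rw [liftAt_all]; exact .all ih
  | dual _ ih => exact .dual ih

theorem exists_iff_sup_of_dual {j : ℕ}
    (ih : ∀ {b n} {φ ψ : L.BoundedFormula α n}, QHier b j φ → QHier b j ψ →
      ∃ χ, QHier b j χ ∧ χ ⇔[∅] φ ⊔ ψ)
    {b : Bool} {k n : ℕ} {ψ : L.BoundedFormula α n} (hψ : QHier b k ψ) (hk : k = j + 1)
    {φ : L.BoundedFormula α n} (hφ : QHier (!b) j φ) :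
    ∃ χ, QHier b k χ ∧ χ ⇔[∅] ψ ⊔ φ := by
  induction hψ with
  | qf hψ =>
    subst hk
    obtain ⟨χ, hχ, hχψφ⟩ := ih (.qf hψ) hφ
    exact ⟨χ, by simpa using hχ.dual, hχψφ⟩
  | @ex _ n _ _ ih' =>
    obtain ⟨χ, hχ, hχψφ⟩ := ih' hk (hφ.liftAt n)
    exact ⟨χ.ex, .ex hχ, hχψφ.ex.trans (Theory.ex_sup_liftAt_iff _ _)⟩
  | @all _ n _ _ ih' =>
    obtain ⟨χ, hχ, hχψφ⟩ := ih' hk (hφ.liftAt n)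
    exact ⟨χ.all, .all hχ, hχψφ.all.trans (Theory.all_sup_liftAt_iff _ _)⟩
  | dual hψ =>
    obtain rfl := Nat.succ_injective hk
    obtain ⟨χ, hχ, hχψφ⟩ := ih hψ hφ
    exact ⟨χ, hχ.dual, hχψφ⟩

theorem exists_iff_sup_of_succ {j : ℕ}
    (ih : ∀ {b n} {φ ψ : L.BoundedFormula α n}, QHier b j φ → QHier b j ψ →
      ∃ χ, QHier b j χ ∧ χ ⇔[∅] φ ⊔ ψ)
    {b : Bool} {k n : ℕ} {φ : L.BoundedFormula α n} (hφ : QHier b k φ) (hk : k = j + 1)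
    {ψ : L.BoundedFormula α n} (hψ : QHier b k ψ) :
    ∃ χ, QHier b k χ ∧ χ ⇔[∅] φ ⊔ ψ := by
  induction hφ with
  | qf hφ =>
    subst hk
    obtain ⟨χ, hχ, hχψφ⟩ := exists_iff_sup_of_dual ih hψ rfl (.qf hφ)
    exact ⟨χ, hχ, hχψφ.trans (Theory.sup_comm_iff _ _)⟩
  | @ex _ n _ _ ih' =>
    obtain ⟨χ, hχ, hχφψ⟩ := ih' hk (hψ.liftAt n)
    exact ⟨χ.ex, .ex hχ, hχφψ.ex.trans (Theory.ex_sup_liftAt_iff _ _)⟩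
  | @all _ n _ _ ih' =>
    obtain ⟨χ, hχ, hχφψ⟩ := ih' hk (hψ.liftAt n)
    exact ⟨χ.all, .all hχ, hχφψ.all.trans (Theory.all_sup_liftAt_iff _ _)⟩
  | dual hφ =>
    obtain rfl := Nat.succ_injective hk
    obtain ⟨χ, hχ, hχψφ⟩ := exists_iff_sup_of_dual ih hψ rfl hφ
    exact ⟨χ, hχ, hχψφ.trans (Theory.sup_comm_iff _ _)⟩

theorem exists_iff_sup {k : ℕ} : ∀ {b : Bool} {n : ℕ} {φ ψ : L.BoundedFormula α n},
    QHier b k φ → QHier b k ψ → ∃ χ, QHier b k χ ∧ χ ⇔[∅] φ ⊔ ψ := by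
  induction k with
  | zero =>
    rintro b n φ ψ ⟨hφ⟩ ⟨hψ⟩
    exact ⟨φ ⊔ ψ, .qf (hφ.sup hψ), .refl _⟩
  | succ j ih => exact fun hφ hψ => exists_iff_sup_of_succ ih hφ rfl hψ

theorem exists_iff_iSup {b : Bool} {k : ℕ} (s : Finset L.Sentence) (hs : ∀ ψ ∈ s, QHier b k ψ) :
    ∃ χ : L.Sentence, QHier b k χ ∧ χ ⇔[∅] Formula.iSup (Subtype.val : s → L.Sentence) := by
  classical
  induction s using Finset.induction_on with
  | empty => exact ⟨⊥, .qf isQF_bot, fun M v xs => by simp [Formula.iSup]⟩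
  | insert ψ s _ ih =>
    obtain ⟨χ₀, hχ₀, hχ₀s⟩ := ih fun ψ' h => hs ψ' (Finset.mem_insert_of_mem h)
    obtain ⟨χ, hχ, hχψχ₀⟩ := exists_iff_sup (hs ψ (Finset.mem_insert_self ψ s)) hχ₀
    refine ⟨χ, hχ, hχψχ₀.trans fun M v xs => ?_⟩
    simp only [realize_iff, realize_sup, hχ₀s.realize_bd_iff, Formula.iSup, realize_iSup,
      Subtype.exists, exists_prop, Finset.mem_insert, exists_eq_or_imp]

end QHier

variable {L : FirstOrder.Language}

def IsDisjClosed (Λ : Set L.Sentence) : Prop :=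
  ∀ s : Finset L.Sentence, ↑s ⊆ Λ → ∃ χ ∈ Λ, χ ⇔[∅] Formula.iSup (Subtype.val : s → L.Sentence)

theorem IsLevelSet.isDisjClosed {Λ : Set L.Sentence} (hΛ : IsLevelSet Λ) : IsDisjClosed Λ := by
  obtain ⟨k, rfl | rfl⟩ := hΛ
  all_goals exact fun s hs => QHier.exists_iff_iSup s hs

theorem models_iff_exists_of_iff_iSup {χ : L.Sentence} {s : Finset L.Sentence}
    (h : χ ⇔[∅] Formula.iSup (Subtype.val : s → L.Sentence)) (M : Type*) [L.Structure M]
    [Nonempty M] : M ⊨ χ ↔ ∃ ψ ∈ s, M ⊨ ψ := by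
  rw [h.models_sentence_iff]
  simp [Sentence.Realize, Formula.realize_iSup]

namespace IsDisjClosed

variable {Λ : Set L.Sentence} {S : L.Theory} (M : Type*) [L.Structure M] [Nonempty M]
  [M ⊨ ThL Λ S]

theorem isSatisfiable_union_image_not_finset (hΛ : IsDisjClosed Λ) (s : Finset L.Sentence)
    (hs : ↑s ⊆ {ψ ∈ Λ | ¬ M ⊨ ψ}) : (S ∪ BoundedFormula.not '' ↑s).IsSatisfiable := by
  obtain ⟨χ, hχΛ, hχs⟩ := hΛ s (hs.trans (Set.sep_subset _ _))
  have hMχ : ¬ M ⊨ χ := by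
    rw [models_iff_exists_of_iff_iSup hχs]
    exact fun ⟨ψ, hψs, hMψ⟩ => (hs hψs).2 hMψ
  have hSχ : ¬ S ⊨ᵇ χ := fun h => hMχ (Theory.realize_sentence_of_mem (ThL Λ S) ⟨hχΛ, h⟩)
  rw [Theory.models_iff_not_satisfiable, not_not] at hSχ
  obtain ⟨N⟩ := hSχ
  have hNχ : ¬ N ⊨ χ := by
    simpa using Theory.realize_sentence_of_mem (S ∪ {χ.not}) (Set.mem_union_right _ rfl)
  have : N ⊨ S ∪ BoundedFormula.not '' ↑s := by
    refine Theory.model_union_iff.2 ⟨N.is_model.mono Set.subset_union_left, ?_⟩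
    refine (Theory.model_iff _).2 ?_
    rintro _ ⟨ψ, hψs, rfl⟩
    rw [Sentence.realize_not]
    exact fun hNψ => hNχ ((models_iff_exists_of_iff_iSup hχs N).2 ⟨ψ, hψs, hNψ⟩)
  exact Theory.Model.isSatisfiable N

theorem isSatisfiable_union_image_not (hΛ : IsDisjClosed Λ) :
    (S ∪ BoundedFormula.not '' {ψ ∈ Λ | ¬ M ⊨ ψ}).IsSatisfiable := by
  classical
  refine Theory.isSatisfiable_iff_isFinitelySatisfiable.2 fun T0 hT0 => ?_
  obtain ⟨T1, T2, rfl, hT1, hT2⟩ := Finset.subset_union_elim (t₁ := S) hT0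
  obtain ⟨s, hs, rfl⟩ := Finset.subset_set_image_iff.1 (hT2.trans Set.sdiff_subset)
  refine (hΛ.isSatisfiable_union_image_not_finset (S := S) M s hs).mono ?_
  push_cast
  exact Set.union_subset_union_left _ hT1

end IsDisjClosed

theorem statement3_general {L : FirstOrder.Language} (Λ : Set L.Sentence) (A : L.Theory) (φ : L.Sentence)
    (hΛ : IsLevelSet Λ)
    (T : L.Theory) (hT : (T ∪ (A ∪ {φ} ∪ ThL Λ (A ∪ {φ.not}))).IsSatisfiable) :
    ∃ Tp Tm : L.Theory, Tp.IsMaximal ∧ Tm.IsMaximal ∧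
      T ∪ A ∪ {φ} ⊆ Tp ∧ A ∪ {φ.not} ⊆ Tm ∧ Λ ∩ Tm ⊆ Λ ∩ Tp := by
  obtain ⟨M⟩ := hT
  have hM : T ∪ (A ∪ {φ} ∪ ThL Λ (A ∪ {φ.not})) ⊆ L.completeTheory M :=
    Theory.completeTheory.subset
  have : M ⊨ ThL Λ (A ∪ {φ.not}) :=
    M.is_model.mono (Set.subset_union_right.trans Set.subset_union_right)
  obtain ⟨N⟩ := hΛ.isDisjClosed.isSatisfiable_union_image_not (S := A ∪ {φ.not}) M
  have hN : A ∪ {φ.not} ∪ BoundedFormula.not '' {ψ ∈ Λ | ¬ M ⊨ ψ} ⊆ L.completeTheory N :=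
    Theory.completeTheory.subset
  refine ⟨L.completeTheory M, L.completeTheory N, completeTheory.isMaximal L M,
    completeTheory.isMaximal L N, ?_, Set.subset_union_left.trans hN, ?_⟩
  · rw [Set.union_assoc]
    exact (Set.union_subset_union_right T Set.subset_union_left).trans hM
  · rintro ψ ⟨hψΛ, hNψ⟩
    refine ⟨hψΛ, by_contra fun hMψ => ?_⟩
    have hNnψ := hN (Set.mem_union_right _ ⟨ψ, ⟨hψΛ, hMψ⟩, rfl⟩)
    rw [mem_completeTheory, Sentence.realize_not] at hNnψ
    exact hNnψ (mem_completeTheory.1 hNψ)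

/-- If `A ⊬ φ ↔ ψ` for every `ψ ∈ ¬Λ` and `T` is consistent with
`A ∪ {φ} ∪ Th_Λ(A ∪ {¬φ})`, then there are complete consistent theories
`T⁺ ⊇ T ∪ A ∪ {φ}` and `T⁻ ⊇ A ∪ {¬φ}` with `Λ ∩ T⁻ ⊆ Λ ∩ T⁺`. -/
theorem statement3 {L : FirstOrder.Language} (Λ : Set L.Sentence) (A : L.Theory) (φ : L.Sentence)
    (hΛ : IsLevelSet Λ) (hφ : ∀ ψ ∈ NegOf Λ, ¬ A ⊨ᵇ (φ.iff ψ))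
    (T : L.Theory) (hT : (T ∪ (A ∪ {φ} ∪ ThL Λ (A ∪ {φ.not}))).IsSatisfiable) :
    ∃ Tp Tm : L.Theory, Tp.IsMaximal ∧ Tm.IsMaximal ∧
      T ∪ A ∪ {φ} ⊆ Tp ∧ A ∪ {φ.not} ⊆ Tm ∧ Λ ∩ Tm ⊆ Λ ∩ Tp :=
  statement3_general Λ A φ hΛ T hT
end

section
/- Let T be a consistent theory without a ∀ₙ-axiomatization. Then there exist complete consistent theories T₀ ⊇ T and T₁ inconsistent with T such that every ∃ₙ-sentence in T₁ is also in T₀. -/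
open FirstOrder FirstOrder.Language

section Aux

open FirstOrder.Language.BoundedFormula

universe u v w

variable {L : FirstOrder.Language.{u, v}} {α : Type}

/-- Semantic equivalence over all nonempty structures in universe `w`. -/
def MyEqv {m : ℕ} (φ ψ : L.BoundedFormula α m) : Prop :=
  ∀ (M : Type w) [L.Structure M] [Nonempty M] (v : α → M) (xs : Fin m → M),
    φ.Realize v xs ↔ ψ.Realize v xs

theorem myliftAt_not {m p : ℕ} (φ : L.BoundedFormula α m) :
    φ.not.liftAt 1 p = (φ.liftAt 1 p).not := rfl

theorem myliftAt_all {m p : ℕ} (φ : L.BoundedFormula α (m + 1)) :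
    φ.all.liftAt 1 p = (φ.liftAt 1 p).all := by
  simp only [liftAt, mapTermRel, castLE_rfl]

theorem myliftAt_ex {m p : ℕ} (φ : L.BoundedFormula α (m + 1)) :
    φ.ex.liftAt 1 p = (φ.liftAt 1 p).ex := by
  rw [BoundedFormula.ex, BoundedFormula.ex, myliftAt_not, myliftAt_all, myliftAt_not]

theorem QHier.myLiftAt {b : Bool} {j m p : ℕ} {φ : L.BoundedFormula α m}
    (h : QHier b j φ) : QHier b j (φ.liftAt 1 p) := by
  induction h with
  | qf h => exact .qf h.liftAt
  | ex _ ih => rw [myliftAt_ex]; exact .ex ih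
  | all _ ih => rw [myliftAt_all]; exact .all ih
  | dual _ ih => exact .dual ih

theorem qhier_neg {b : Bool} {j m : ℕ} {φ : L.BoundedFormula α m} (h : QHier b j φ) :
    ∃ χ : L.BoundedFormula α m, QHier (!b) j χ ∧ MyEqv.{u, v, w} χ φ.not := by
  induction h with
  | qf h =>
    exact ⟨_, .qf h.not, fun M _ _ v xs => Iff.rfl⟩
  | @ex j m θ _ ih =>
    obtain ⟨χ, hχ, he⟩ := ih
    refine ⟨χ.all, .all hχ, ?_⟩
    intro M _ _ v xs
    rw [realize_all, realize_not, realize_ex, not_exists]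
    exact forall_congr' fun a => (he M v _).trans realize_not
  | @all j m θ _ ih =>
    obtain ⟨χ, hχ, he⟩ := ih
    refine ⟨χ.ex, .ex hχ, ?_⟩
    intro M _ _ v xs
    rw [realize_ex, realize_not, realize_all, not_forall]
    exact exists_congr fun a => (he M v _).trans realize_not
  | dual _ ih =>
    obtain ⟨χ, hχ, he⟩ := ih
    exact ⟨χ, .dual hχ, he⟩

theorem qhier_inf_qf {b : Bool} {j m : ℕ} {φ : L.BoundedFormula α m} (h : QHier b j φ) :
    ∀ ψ : L.BoundedFormula α m, ψ.IsQF →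
      ∃ χ, QHier b j χ ∧ MyEqv.{u, v, w} χ (φ ⊓ ψ) := by
  induction h with
  | qf h =>
    exact fun ψ hψ => ⟨_, .qf (h.inf hψ), fun M _ _ v xs => Iff.rfl⟩
  | @ex j m θ _ ih =>
    intro ψ hψ
    obtain ⟨χ, hχ, he⟩ := ih (ψ.liftAt 1 m) hψ.liftAt
    refine ⟨χ.ex, .ex hχ, ?_⟩
    intro M _ _ v xs
    have key : ∀ a : M, χ.Realize v (Fin.snoc xs a) ↔
        θ.Realize v (Fin.snoc xs a) ∧ ψ.Realize v xs := fun a => by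
      rw [he M v _, realize_inf, realize_liftAt_one_self, Fin.snoc_comp_castSucc]
    rw [realize_ex, realize_inf, realize_ex]
    simp only [key]
    exact exists_and_right
  | @all j m θ _ ih =>
    intro ψ hψ
    obtain ⟨χ, hχ, he⟩ := ih (ψ.liftAt 1 m) hψ.liftAt
    refine ⟨χ.all, .all hχ, ?_⟩
    intro M _ _ v xs
    have key : ∀ a : M, χ.Realize v (Fin.snoc xs a) ↔
        θ.Realize v (Fin.snoc xs a) ∧ ψ.Realize v xs := fun a => by
      rw [he M v _, realize_inf, realize_liftAt_one_self, Fin.snoc_comp_castSucc]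
    rw [realize_all, realize_inf, realize_all]
    simp only [key]
    rw [forall_and, forall_const]
  | dual _ ih =>
    intro ψ hψ
    obtain ⟨χ, hχ, he⟩ := ih ψ hψ
    exact ⟨χ, .dual hχ, he⟩

theorem qhier_inf_aux {b : Bool} {j m : ℕ} {ψ : L.BoundedFormula α m} (h : QHier b j ψ) :
    ∀ j₀, j = j₀ + 1 →
      (∀ (m' : ℕ) (φ' ψ' : L.BoundedFormula α m'), QHier (!b) j₀ φ' → QHier (!b) j₀ ψ' →
        ∃ χ, QHier (!b) j₀ χ ∧ MyEqv.{u, v, w} χ (φ' ⊓ ψ')) →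
      ∀ φ : L.BoundedFormula α m, QHier (!b) j₀ φ →
        ∃ χ, QHier b j χ ∧ MyEqv.{u, v, w} χ (φ ⊓ ψ) := by
  induction h with
  | @qf b j m ψ hq =>
    rintro j₀ rfl F φ hφ
    exact qhier_inf_qf (QHier.dual hφ) ψ hq
  | @ex j' m' θ hθ ih =>
    intro j₀ hj F φ hφ
    obtain ⟨χ, hχ, he⟩ := ih j₀ hj F (φ.liftAt 1 m') hφ.myLiftAt
    refine ⟨χ.ex, .ex hχ, ?_⟩
    intro M _ _ v xs
    have key : ∀ a : M, χ.Realize v (Fin.snoc xs a) ↔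
        φ.Realize v xs ∧ θ.Realize v (Fin.snoc xs a) := fun a => by
      rw [he M v _, realize_inf, realize_liftAt_one_self, Fin.snoc_comp_castSucc]
    rw [realize_ex, realize_inf, realize_ex]
    simp only [key]
    exact exists_and_left
  | @all j' m' θ hθ ih =>
    intro j₀ hj F φ hφ
    obtain ⟨χ, hχ, he⟩ := ih j₀ hj F (φ.liftAt 1 m') hφ.myLiftAt
    refine ⟨χ.all, .all hχ, ?_⟩
    intro M _ _ v xs
    have key : ∀ a : M, χ.Realize v (Fin.snoc xs a) ↔
        φ.Realize v xs ∧ θ.Realize v (Fin.snoc xs a) := fun a => by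
      rw [he M v _, realize_inf, realize_liftAt_one_self, Fin.snoc_comp_castSucc]
    rw [realize_all, realize_inf, realize_all]
    simp only [key]
    rw [forall_and, forall_const]
  | @dual b' j'' m'' ψ h' _ =>
    intro j₀ hj F φ hφ
    obtain rfl : j'' = j₀ := Nat.add_right_cancel hj
    obtain ⟨χ, hχ, he⟩ := F m'' φ ψ hφ h'
    exact ⟨χ, .dual hχ, he⟩

theorem qhier_inf_main {b : Bool} {j m : ℕ} {φ : L.BoundedFormula α m} (hφ : QHier b j φ) :
    (∀ j₀, j = j₀ + 1 →
      ∀ (m' : ℕ) (φ' ψ' : L.BoundedFormula α m'), QHier (!b) j₀ φ' → QHier (!b) j₀ ψ' →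
        ∃ χ, QHier (!b) j₀ χ ∧ MyEqv.{u, v, w} χ (φ' ⊓ ψ')) →
    ∀ ψ : L.BoundedFormula α m, QHier b j ψ →
      ∃ χ, QHier b j χ ∧ MyEqv.{u, v, w} χ (φ ⊓ ψ) := by
  induction hφ with
  | qf h =>
    intro _ ψ hψ
    obtain ⟨χ, hχ, he⟩ := qhier_inf_qf.{u, v, w} hψ _ h
    refine ⟨χ, hχ, fun M _ _ v xs => (he M v xs).trans ?_⟩
    rw [realize_inf, realize_inf, and_comm]
  | @ex j' m' θ hθ ih =>
    intro F ψ hψ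
    obtain ⟨χ, hχ, he⟩ := ih F (ψ.liftAt 1 m') hψ.myLiftAt
    refine ⟨χ.ex, .ex hχ, ?_⟩
    intro M _ _ v xs
    have key : ∀ a : M, χ.Realize v (Fin.snoc xs a) ↔
        θ.Realize v (Fin.snoc xs a) ∧ ψ.Realize v xs := fun a => by
      rw [he M v _, realize_inf, realize_liftAt_one_self, Fin.snoc_comp_castSucc]
    rw [realize_ex, realize_inf, realize_ex]
    simp only [key]
    exact exists_and_right
  | @all j' m' θ hθ ih =>
    intro F ψ hψ
    obtain ⟨χ, hχ, he⟩ := ih F (ψ.liftAt 1 m') hψ.myLiftAt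
    refine ⟨χ.all, .all hχ, ?_⟩
    intro M _ _ v xs
    have key : ∀ a : M, χ.Realize v (Fin.snoc xs a) ↔
        θ.Realize v (Fin.snoc xs a) ∧ ψ.Realize v xs := fun a => by
      rw [he M v _, realize_inf, realize_liftAt_one_self, Fin.snoc_comp_castSucc]
    rw [realize_all, realize_inf, realize_all]
    simp only [key]
    rw [forall_and, forall_const]
  | @dual b' j'' m'' φ h' _ =>
    intro F ψ hψ
    exact qhier_inf_aux hψ j'' rfl (F j'' rfl) φ h'

theorem qhier_inf (j : ℕ) : ∀ {b : Bool} {m : ℕ} {φ ψ : L.BoundedFormula α m},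
    QHier b j φ → QHier b j ψ → ∃ χ, QHier b j χ ∧ MyEqv.{u, v, w} χ (φ ⊓ ψ) := by
  induction j using Nat.strong_induction_on with
  | _ j IHj =>
    intro b m φ ψ hφ hψ
    refine qhier_inf_main hφ (fun j₀ hj => ?_) ψ hψ
    subst hj
    exact fun m' φ' ψ' h1 h2 => IHj j₀ (Nat.lt_succ_self j₀) h1 h2

theorem qhier_finsetConj (j : ℕ) (s : Finset L.Sentence) :
    (∀ θ ∈ s, QHier true j θ) →
      ∃ ψ : L.Sentence, QHier true j ψ ∧
        ∀ (M : Type w) [L.Structure M] [Nonempty M], M ⊨ ψ ↔ ∀ θ ∈ s, M ⊨ θ := by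
  classical
  induction s using Finset.induction_on with
  | empty =>
    intro _
    refine ⟨⊤, .qf .top, fun M _ _ => ?_⟩
    simp [Sentence.Realize]
  | @insert θ₀ s hθ₀ ih =>
    intro hall
    obtain ⟨ψ, hψ, he⟩ := ih fun θ ht => hall θ (Finset.mem_insert_of_mem ht)
    obtain ⟨χ, hχ, he2⟩ := qhier_inf.{u, v, w} j (hall θ₀ (Finset.mem_insert_self θ₀ s)) hψ
    refine ⟨χ, hχ, fun M _ _ => ?_⟩
    have h1 : M ⊨ χ ↔ (M ⊨ θ₀ ∧ M ⊨ ψ) := by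
      have h2 := he2 M default default
      rw [realize_inf] at h2
      exact h2
    rw [h1, he M, Finset.forall_mem_insert]

end Aux

/-- If a consistent theory `T` has no `∀ₙ`-axiomatization, then there are complete consistent
theories `T₀ ⊇ T` and `T₁` inconsistent with `T` such that every `∃ₙ`-sentence of `T₁` is
in `T₀`. -/
theorem statement5 {L : FirstOrder.Language} (n : ℕ) (T : L.Theory)
    (hTcon : T.IsSatisfiable)
    (hax : ¬ ∀ φ ∈ T, ThL (AllSet L n) T ⊨ᵇ φ) :
    ∃ T₀ T₁ : L.Theory, T₀.IsMaximal ∧ T₁.IsMaximal ∧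
      T ⊆ T₀ ∧ ¬ (T₁ ∪ T).IsSatisfiable ∧ ExSet L n ∩ T₁ ⊆ ExSet L n ∩ T₀ := by
  classical
  push_neg at hax
  obtain ⟨φ₀, hφ₀T, hφ₀⟩ := hax
  rw [Theory.models_iff_not_satisfiable, not_not] at hφ₀
  obtain ⟨M⟩ := hφ₀
  have hMnot : M ⊨ φ₀.not :=
    Theory.realize_sentence_of_mem (T := ThL (AllSet L n) T ∪ {φ₀.not}) (Set.mem_union_right _ rfl)
  have hMth : ∀ χ ∈ ThL (AllSet L n) T, M ⊨ χ := fun χ hχ =>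
    Theory.realize_sentence_of_mem (T := ThL (AllSet L n) T ∪ {φ₀.not}) (Set.mem_union_left _ hχ)
  set T₁ := L.completeTheory M with hT₁def
  have hsat : (T ∪ (ExSet L n ∩ T₁)).IsSatisfiable := by
    rw [Theory.isSatisfiable_iff_isFinitelySatisfiable]
    intro F hF
    set s : Finset L.Sentence := F.filter (fun θ => θ ∈ ExSet L n ∩ T₁) with hs
    have hsQ : ∀ θ ∈ s, QHier true n θ := fun θ ht => ((Finset.mem_filter.1 ht).2).1
    obtain ⟨ψ, hψQ, he⟩ := qhier_finsetConj n s hsQ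
    have hMψ : M ⊨ ψ := (he M).2 fun θ ht =>
      mem_completeTheory.1 ((Finset.mem_filter.1 ht).2).2
    have hsatψ : (T ∪ {ψ}).IsSatisfiable := by
      by_contra hun
      obtain ⟨χ, hχQ, heχ⟩ := qhier_neg hψQ
      have hTχ : T ⊨ᵇ χ := by
        rw [Theory.models_sentence_iff]
        intro N
        have hNψ : ¬ N ⊨ ψ := by
          intro hNψ
          haveI : N ⊨ T ∪ {ψ} :=
            Theory.model_union_iff.2 ⟨inferInstance, Theory.model_singleton_iff.2 hNψ⟩
          exact hun (Theory.Model.isSatisfiable N)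
        have h2 := heχ N default default
        rw [BoundedFormula.realize_not] at h2
        exact h2.2 hNψ
      have hMχ : M ⊨ χ := hMth χ ⟨hχQ, hTχ⟩
      have h2 := heχ M default default
      rw [BoundedFormula.realize_not] at h2
      exact (h2.1 hMχ) hMψ
    obtain ⟨N₀⟩ := hsatψ
    have hN₀ψ : N₀ ⊨ ψ :=
      Theory.realize_sentence_of_mem (T := T ∪ {ψ}) (Set.mem_union_right _ rfl)
    haveI : N₀ ⊨ (↑F : L.Theory) := by
      refine ⟨fun θ hθ => ?_⟩
      rcases hF hθ with hT | hE
      · exact Theory.realize_sentence_of_mem (T := T ∪ {ψ}) (Set.mem_union_left _ hT)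
      · exact (he N₀).1 hN₀ψ θ (Finset.mem_filter.2 ⟨hθ, hE⟩)
    exact Theory.Model.isSatisfiable N₀
  obtain ⟨N⟩ := hsat
  refine ⟨L.completeTheory N, T₁, completeTheory.isMaximal L N, completeTheory.isMaximal L M,
    ?_, ?_, ?_⟩
  · intro θ hθ
    exact mem_completeTheory.2
      (Theory.realize_sentence_of_mem (T := T ∪ (ExSet L n ∩ T₁)) (Set.mem_union_left _ hθ))
  · rintro ⟨P⟩
    have h1 : P ⊨ φ₀ := Theory.realize_sentence_of_mem (T := T₁ ∪ T) (Set.mem_union_right _ hφ₀T)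
    have h2 : P ⊨ φ₀.not :=
      Theory.realize_sentence_of_mem (T := T₁ ∪ T) (Set.mem_union_left _ (mem_completeTheory.2 hMnot))
    exact h2 h1
  · rintro ψ ⟨h1, h2⟩
    exact ⟨h1, mem_completeTheory.2
      (Theory.realize_sentence_of_mem (T := T ∪ (ExSet L n ∩ T₁)) (Set.mem_union_right _ ⟨h1, h2⟩))⟩
end

section
/- Let τ consist of a single binary relation R, and let T assert: R is irreflexive, symmetric, every element has at most one R-neighbor, there are infinitely many elements with an R-neighbor, and infinitely many elements without an R-neighbor. Then T is ℵ₀-categorical. -/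
open FirstOrder FirstOrder.Language FirstOrder.Language.Structure

/-- The language with a single binary relation `R`. -/
def binLang : FirstOrder.Language where
  Functions := fun _ => Empty
  Relations := fun n => match n with | 2 => Unit | _ => Empty

/-- The interpretation of `R` in a `binLang`-structure. -/
def rel {M : Type} [binLang.Structure M] (x y : M) : Prop :=
  RelMap (L := binLang) (n := 2) (Unit.unit : binLang.Relations 2) ![x, y]

/-!
The matched points of a model carry the fixed-point-free involution "take the partner", and
choosing one point from each pair identifies them with `ℕ × Bool` so that the involution becomes
`(n, b) ↦ (n, !b)`; the unmatched points are just a countably infinite set. Hence every countable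
model is isomorphic to `ℕ × Bool ⊕ ℕ` with this standard matching.
-/

open Function

structure IsPartialMatching {α : Type*} (r : α → α → Prop) : Prop where
  irrefl : ∀ x, ¬ r x x
  symm : ∀ {x y}, r x y → r y x
  unique : ∀ {x y z}, r x y → r x z → y = z

def pairRel (p q : ℕ × Bool) : Prop := q = (p.1, !p.2)

def stdMatching : ℕ × Bool ⊕ ℕ → ℕ × Bool ⊕ ℕ → Prop :=
  Sum.LiftRel pairRel fun _ _ => False

theorem infinite_setOf_lt_of_involutive {S : Type*} [Infinite S] {σ : S → S}
    (hσ : Involutive σ) (hfix : ∀ x, σ x ≠ x) {q : S → ℕ} (hq : Injective q) :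
    {x | q x < q (σ x)}.Infinite := by
  intro hfin
  refine Set.infinite_univ ((hfin.union (hfin.preimage hσ.injective.injOn)).subset fun x _ => ?_)
  have : q x ≠ q (σ x) := hq.ne (hfix x).symm
  simp only [Set.mem_union, Set.mem_ofPred_eq, Set.mem_preimage, hσ x]
  omega

theorem exists_equiv_prod_bool_of_involutive {S : Type*} [Countable S] [Infinite S]
    {σ : S → S} (hσ : Involutive σ) (hfix : ∀ x, σ x ≠ x) :
    ∃ e : S ≃ ℕ × Bool, ∀ x, e (σ x) = ((e x).1, !(e x).2) := by
  classical
  obtain ⟨q⟩ : Nonempty (S ≃ ℕ) := nonempty_equiv_of_countable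
  -- `A` picks one point out of every orbit `{x, σ x}`.
  set A : Set S := {x | q x < q (σ x)}
  have hmem : ∀ x, σ x ∈ A ↔ x ∉ A := fun x => by
    have : q x ≠ q (σ x) := q.injective.ne (hfix x).symm
    simp only [A, Set.mem_ofPred_eq, hσ x]
    omega
  have := (infinite_setOf_lt_of_involutive hσ hfix q.injective).to_subtype
  obtain ⟨r⟩ : Nonempty (A ≃ ℕ) := nonempty_equiv_of_countable
  refine ⟨{
    toFun x := if h : x ∈ A then (r ⟨x, h⟩, false) else (r ⟨σ x, (hmem x).2 h⟩, true)
    invFun p := if p.2 then σ (r.symm p.1) else r.symm p.1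
    left_inv x := by by_cases h : x ∈ A <;> simp [h, hσ x]
    right_inv := ?_ }, fun x => ?_⟩
  · rintro ⟨n, _ | _⟩
    · simp
    · simp [(hmem _).not_left.2 (r.symm n).2, hσ _]
  · by_cases h : x ∈ A
    · simp [h, (hmem x).not_left.2 h, hσ x]
    · simp [h, (hmem x).2 h]

namespace IsPartialMatching

variable {α : Type*} {r : α → α → Prop}

theorem exists_equiv_pairRel [Countable α] [Infinite α] (hr : IsPartialMatching r)
    (htot : ∀ x, ∃ y, r x y) : ∃ e : α ≃ ℕ × Bool, ∀ x y, r x y ↔ pairRel (e x) (e y) := by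
  choose σ hσ using htot
  have hinv : Involutive σ := fun x => hr.unique (hσ (σ x)) (hr.symm (hσ x))
  have hfix : ∀ x, σ x ≠ x := fun x h => hr.irrefl x (by simpa only [h] using hσ x)
  obtain ⟨e, he⟩ := exists_equiv_prod_bool_of_involutive hinv hfix
  refine ⟨e, fun x y => ?_⟩
  calc r x y ↔ y = σ x := ⟨fun h => hr.unique h (hσ x), fun h => h ▸ hσ x⟩
    _ ↔ pairRel (e x) (e y) := by rw [pairRel, ← he, e.apply_eq_iff_eq]

theorem comap (hr : IsPartialMatching r) {β : Type*} {f : β → α} (hf : Injective f) :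
    IsPartialMatching fun a b => r (f a) (f b) where
  irrefl a := hr.irrefl (f a)
  symm := hr.symm
  unique hab hac := hf (hr.unique hab hac)

theorem exists_equiv_stdMatching [Countable α] (hr : IsPartialMatching r)
    (hmat : {x | ∃ y, r x y}.Infinite) (hunm : {x | ¬ ∃ y, r x y}.Infinite) :
    ∃ e : α ≃ ℕ × Bool ⊕ ℕ, ∀ x y, r x y ↔ stdMatching (e x) (e y) := by
  classical
  have := hmat.to_subtype
  have := hunm.to_subtype
  obtain ⟨eS, heS⟩ := (hr.comap Subtype.val_injective).exists_equiv_pairRel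
    (α := {x | ∃ y, r x y}) fun a => by
      obtain ⟨y, hy⟩ := a.2
      exact ⟨⟨y, a, hr.symm hy⟩, hy⟩
  obtain ⟨eU⟩ : Nonempty ({x | ¬ ∃ y, r x y} ≃ ℕ) := nonempty_equiv_of_countable
  set e := (Equiv.sumCompl fun x => ∃ y, r x y).symm.trans (eS.sumCongr eU)
  suffices ∀ a b, r (e.symm a) (e.symm b) ↔ stdMatching a b from
    ⟨e, fun x y => by simpa using this (e x) (e y)⟩
  rintro (a | a) (b | b)
  · simpa [e, stdMatching] using heS (eS.symm a) (eS.symm b)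
  · simpa [e, stdMatching] using fun h => (eU.symm b).2 ⟨_, hr.symm h⟩
  · simpa [e, stdMatching] using fun h => (eU.symm a).2 ⟨_, h⟩
  · simpa [e, stdMatching] using fun h => (eU.symm a).2 ⟨_, h⟩

end IsPartialMatching

theorem relMap_iff_rel {M : Type} [binLang.Structure M] (v : Fin 2 → M) :
    RelMap (L := binLang) (n := 2) () v ↔ rel (v 0) (v 1) := by
  rw [rel, show ![v 0, v 1] = v from List.ofFn_inj.mp rfl]

def equivOfRelIff {M N : Type} [binLang.Structure M] [binLang.Structure N] (E : M ≃ N)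
    (hE : ∀ x y, rel (E x) (E y) ↔ rel x y) : M ≃[binLang] N where
  toEquiv := E
  map_fun' f := Empty.elim f
  map_rel' {n} R v := by
    match n, R with
    | 2, () => simpa [relMap_iff_rel] using hE (v 0) (v 1)

theorem statement10_general (M N : Type) [Countable M] [Countable N]
    [binLang.Structure M] [binLang.Structure N]
    (hMirr : ∀ x : M, ¬ rel x x) (hMsym : ∀ x y : M, rel x y → rel y x)
    (hMfun : ∀ x y z : M, rel x y → rel x z → y = z)
    (hMmat : {x : M | ∃ y, rel x y}.Infinite)
    (hMunm : {x : M | ¬ ∃ y, rel x y}.Infinite)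
    (hNirr : ∀ x : N, ¬ rel x x) (hNsym : ∀ x y : N, rel x y → rel y x)
    (hNfun : ∀ x y z : N, rel x y → rel x z → y = z)
    (hNmat : {x : N | ∃ y, rel x y}.Infinite)
    (hNunm : {x : N | ¬ ∃ y, rel x y}.Infinite) :
    Nonempty (M ≃[binLang] N) := by
  obtain ⟨eM, heM⟩ := IsPartialMatching.exists_equiv_stdMatching
    ⟨hMirr, hMsym _ _, hMfun _ _ _⟩ hMmat hMunm
  obtain ⟨eN, heN⟩ := IsPartialMatching.exists_equiv_stdMatching
    ⟨hNirr, hNsym _ _, hNfun _ _ _⟩ hNmat hNunm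
  exact ⟨equivOfRelIff (eM.trans eN.symm) fun x y => by simp [heN, heM]⟩

/-- The theory saying `R` is an irreflexive symmetric partial matching with infinitely many
matched and infinitely many unmatched points is ℵ₀-categorical. -/
theorem statement10 (M N : Type) [Countable M] [Infinite M] [Countable N] [Infinite N]
    [binLang.Structure M] [binLang.Structure N]
    (hMirr : ∀ x : M, ¬ rel x x) (hMsym : ∀ x y : M, rel x y → rel y x)
    (hMfun : ∀ x y z : M, rel x y → rel x z → y = z)
    (hMmat : {x : M | ∃ y, rel x y}.Infinite)
    (hMunm : {x : M | ¬ ∃ y, rel x y}.Infinite)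
    (hNirr : ∀ x : N, ¬ rel x x) (hNsym : ∀ x y : N, rel x y → rel y x)
    (hNfun : ∀ x y z : N, rel x y → rel x z → y = z)
    (hNmat : {x : N | ∃ y, rel x y}.Infinite)
    (hNunm : {x : N | ¬ ∃ y, rel x y}.Infinite) :
    Nonempty (M ≃[binLang] N) :=
  statement10_general M N hMirr hMsym hMfun hMmat hMunm hNirr hNsym hNfun hNmat hNunm
end

section
/- Any countable linear order L with successor relation S that satisfies: (i) L is a linear order with no least or greatest element, (ii) S(x,y) holds iff y is the immediate successor of x, and (iii) there exists a point x such that below x the order is dense-in-itself from the left at x, above x the order is dense and no element above x has a predecessor, and below x every element is matched into a successor pair where the lower element has a successor and no predecessor — is isomorphic to 2·ℚ + 1 + ℚ with its successor relation. -/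
/-!
Let `x` be the point given by (★). Above `x` the order is countable, dense and without endpoints,
hence isomorphic to `ℚ` by Cantor's back-and-forth theorem. Below `x` every point lies in exactly
one successor pair, so `Iio x ≃o L ×ₗ Bool` where `L` is the set of lower points of pairs. Since a
lower point has no predecessor, no two pairs are adjacent, so `L` is dense; it has no endpoints
either, hence `L ≃o ℚ` too.
-/

open scoped Lex

/-- `S x y`: `y` is the immediate successor of `x`. -/
def Succ' {M : Type*} [LinearOrder M] (x y : M) : Prop :=
  x < y ∧ ∀ z, ¬ (x < z ∧ z < y)

/-- The linear order `2·ℚ + 1 + ℚ`: ℚ-many adjacent pairs, a single point, then a copy of ℚ. -/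
abbrev TwoQOneQ : Type := (ℚ ×ₗ Bool) ⊕ₗ (PUnit ⊕ₗ ℚ)

open Set

section Succ'

variable {α : Type*} [LinearOrder α] {a b c : α}

theorem Succ'.right_le_of_lt (h : Succ' a b) (hac : a < c) : b ≤ c :=
  le_of_not_gt fun hcb => h.2 c ⟨hac, hcb⟩

theorem Succ'.right_unique (hb : Succ' a b) (hc : Succ' a c) : b = c :=
  le_antisymm (hb.right_le_of_lt hc.1) (hc.right_le_of_lt hb.1)

theorem not_succ'_iff_exists_between (hab : a < b) : ¬ Succ' a b ↔ ∃ z, a < z ∧ z < b := by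
  simp [Succ', hab]

theorem succ'_subtype_iff {s : Set α} [s.OrdConnected] {a b : s} :
    Succ' a b ↔ Succ' (a : α) b := by
  refine ⟨fun ⟨hab, h⟩ => ⟨hab, fun z hz => ?_⟩, fun ⟨hab, h⟩ => ⟨hab, fun z hz => h z hz⟩⟩
  exact h ⟨z, OrdConnected.out ‹_› a.2 b.2 ⟨hz.1.le, hz.2.le⟩⟩ hz

end Succ'

section Lex

variable {α β : Type*} [Preorder α] [PartialOrder β] {a a' : α} {b' : β}

theorem Prod.Lex.lt_of_toLex_top_lt [OrderTop β] (h : toLex (a, (⊤ : β)) < toLex (a', b')) :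
    a < a' := by
  rcases Prod.Lex.toLex_lt_toLex.1 h with h | ⟨-, h⟩
  exacts [h, absurd h not_top_lt]

theorem Prod.Lex.lt_of_lt_toLex_bot [OrderBot β] (h : toLex (a', b') < toLex (a, (⊥ : β))) :
    a' < a := by
  rcases Prod.Lex.toLex_lt_toLex.1 h with h | ⟨-, h⟩
  exacts [h, absurd h not_lt_bot]

end Lex

noncomputable def OrderIso.sumLexPUnitIoi {α : Type*} [LinearOrder α] (x : α) :
    PUnit ⊕ₗ Ioi x ≃o Ici x := by
  refine StrictMono.orderIsoOfSurjective
    (fun p => Sum.elim (fun _ => ⟨x, self_mem_Ici⟩) (fun y : Ioi x => ⟨y, mem_Ici.2 y.2.le⟩)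
      (ofLex p)) ?_ ?_
  · intro p q h
    induction p using Lex.rec with | _ p => induction q using Lex.rec with | _ q =>
    rcases p with _ | a <;> rcases q with _ | b
    · simp at h
    · exact b.2
    · simp at h
    · simpa using h
  · rintro ⟨y, hy⟩
    rcases (mem_Ici.1 hy).eq_or_lt with rfl | hy
    · exact ⟨toLex (Sum.inl PUnit.unit), rfl⟩
    · exact ⟨toLex (Sum.inr ⟨y, hy⟩), rfl⟩

/-- The order is partitioned into pairs `a < b` with `Succ' a b`. -/
structure IsPaired (α : Type*) [LinearOrder α] : Prop where
  exists_succ'_or_pred : ∀ a : α, (∃ b, Succ' a b) ∨ ∃ b, Succ' b a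
  not_succ'_of_succ' : ∀ {a b c : α}, Succ' a b → ¬ Succ' c a

abbrev PairLower (α : Type*) [LinearOrder α] : Type _ := {a : α // ∃ b, Succ' a b}

namespace PairLower

variable {α : Type*} [LinearOrder α]

noncomputable def succ (a : PairLower α) : α := a.2.choose

theorem succ'_succ (a : PairLower α) : Succ' (a : α) a.succ := a.2.choose_spec

noncomputable def pairPoint (p : PairLower α ×ₗ Bool) : α :=
  bif (ofLex p).2 then (ofLex p).1.succ else (ofLex p).1

theorem le_pairPoint (a : PairLower α) (b : Bool) : (a : α) ≤ pairPoint (toLex (a, b)) := by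
  cases b
  exacts [le_rfl, a.succ'_succ.1.le]

theorem pairPoint_le_succ (a : PairLower α) (b : Bool) : pairPoint (toLex (a, b)) ≤ a.succ := by
  cases b
  exacts [a.succ'_succ.1.le, le_rfl]

variable (hα : IsPaired α)
include hα

theorem succ_lt {a a' : PairLower α} (h : a < a') : a.succ < a' :=
  (a.succ'_succ.right_le_of_lt h).lt_of_ne fun he =>
    hα.not_succ'_of_succ' a'.succ'_succ (he ▸ a.succ'_succ)

theorem strictMono_pairPoint : StrictMono (pairPoint (α := α)) := by
  intro p q h
  induction p using Lex.rec with | _ p => induction q using Lex.rec with | _ q =>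
  obtain ⟨a, b⟩ := p
  obtain ⟨a', b'⟩ := q
  rcases Prod.Lex.toLex_lt_toLex.1 h with ha | ⟨rfl, hb⟩
  · calc pairPoint (toLex (a, b)) ≤ a.succ := pairPoint_le_succ a b
      _ < a' := succ_lt hα ha
      _ ≤ pairPoint (toLex (a', b')) := le_pairPoint a' b'
  · obtain ⟨rfl, rfl⟩ : b = false ∧ b' = true := Bool.lt_iff.1 hb
    exact a.succ'_succ.1

theorem surjective_pairPoint : Function.Surjective (pairPoint (α := α)) := by
  intro x
  rcases hα.exists_succ'_or_pred x with hx | ⟨y, hyx⟩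
  · exact ⟨toLex (⟨x, hx⟩, false), rfl⟩
  · exact ⟨toLex (⟨y, x, hyx⟩, true), (PairLower.succ'_succ ⟨y, x, hyx⟩).right_unique hyx⟩

noncomputable def orderIso : PairLower α ×ₗ Bool ≃o α :=
  StrictMono.orderIsoOfSurjective _ (strictMono_pairPoint hα) (surjective_pairPoint hα)

noncomputable def lower (w : α) : PairLower α := (ofLex ((orderIso hα).symm w)).1

theorem lt_lower_of_succ_lt {a : PairLower α} {w : α} (h : a.succ < w) : a < lower hα w :=
  Prod.Lex.lt_of_toLex_top_lt (b' := (ofLex ((orderIso hα).symm w)).2)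
    ((orderIso hα).lt_symm_apply.2 (by exact h))

theorem lower_lt_of_lt {a : PairLower α} {w : α} (h : w < a) : lower hα w < a :=
  Prod.Lex.lt_of_lt_toLex_bot (b' := (ofLex ((orderIso hα).symm w)).2)
    ((orderIso hα).symm_apply_lt.2 (by exact h))

theorem denselyOrdered : DenselyOrdered (PairLower α) := by
  refine ⟨fun a a' h => ?_⟩
  obtain ⟨w, hw, hw'⟩ := (not_succ'_iff_exists_between (succ_lt hα h)).1
    (hα.not_succ'_of_succ' a'.succ'_succ)
  exact ⟨lower hα w, lt_lower_of_succ_lt hα hw, lower_lt_of_lt hα hw'⟩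

theorem noMaxOrder [NoMaxOrder α] : NoMaxOrder (PairLower α) :=
  ⟨fun a => ⟨_, lt_lower_of_succ_lt hα (exists_gt a.succ).choose_spec⟩⟩

theorem noMinOrder [NoMinOrder α] : NoMinOrder (PairLower α) :=
  ⟨fun a => ⟨_, lower_lt_of_lt hα (exists_lt (a : α)).choose_spec⟩⟩

end PairLower

theorem isPaired_Iio {M : Type*} [LinearOrder M] {x : M}
    (hleft : ∀ y, y < x → ∃ z, y < z ∧ z < x)
    (hpairs : ∀ y, y < x → (∃ z, Succ' y z ∨ Succ' z y) ∧
      ((∃ u, Succ' y u) → ∀ v, ¬ Succ' v y)) :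
    IsPaired (Iio x) where
  exists_succ'_or_pred := by
    rintro ⟨y, hy⟩
    obtain ⟨⟨z, hz | hz⟩, -⟩ := hpairs y hy
    · obtain ⟨w, hyw, hwx⟩ := hleft y hy
      exact .inl ⟨⟨z, (hz.right_le_of_lt hyw).trans_lt hwx⟩, succ'_subtype_iff.2 hz⟩
    · exact .inr ⟨⟨z, hz.1.trans hy⟩, succ'_subtype_iff.2 hz⟩
  not_succ'_of_succ' {a b c} hab hca :=
    (hpairs a a.2).2 ⟨b, succ'_subtype_iff.1 hab⟩ c (succ'_subtype_iff.1 hca)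

/-- Any countable linear order without endpoints satisfying the sentence (★) is isomorphic
to `2·ℚ + 1 + ℚ` (an order isomorphism automatically respects the successor relation, which
is definable from the order). -/
theorem statement11 (M : Type) [Countable M] [LinearOrder M]
    (hnomin : ∀ a : M, ∃ b, b < a) (hnomax : ∀ a : M, ∃ b, a < b)
    (hstar : ∃ x : M,
      (∀ y, y < x → ∃ z, y < z ∧ z < x) ∧
      (∀ y, x < y → (∃ z, x < z ∧ z < y) ∧ (∀ u, x < u → ¬ Succ' y u)) ∧
      (∀ y, y < x → (∃ z, Succ' y z ∨ Succ' z y) ∧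
        ((∃ u, Succ' y u) → ∀ v, ¬ Succ' v y))) :
    Nonempty (M ≃o TwoQOneQ) := by
  obtain ⟨x, hleft, hright, hpairs⟩ := hstar
  have : NoMinOrder M := ⟨hnomin⟩
  have : NoMaxOrder M := ⟨hnomax⟩
  have hpaired : IsPaired (Iio x) := isPaired_Iio hleft hpairs
  have : NoMaxOrder (Iio x) :=
    ⟨fun ⟨y, hy⟩ => let ⟨z, hyz, hzx⟩ := hleft y hy; ⟨⟨z, hzx⟩, hyz⟩⟩
  have := PairLower.denselyOrdered hpaired
  have := PairLower.noMinOrder hpaired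
  have := PairLower.noMaxOrder hpaired
  have : Nonempty (PairLower (Iio x)) := ⟨PairLower.lower hpaired (Classical.arbitrary _)⟩
  have : NoMinOrder (Ioi x) :=
    ⟨fun ⟨y, hy⟩ => let ⟨z, hxz, hzy⟩ := (hright y hy).1; ⟨⟨z, hxz⟩, hzy⟩⟩
  have : DenselyOrdered (Ioi x) := ⟨fun a b hab => by
    obtain ⟨z, haz, hzb⟩ :=
      (not_succ'_iff_exists_between (Subtype.coe_lt_coe.2 hab)).1 ((hright a a.2).2 b b.2)
    exact ⟨⟨z, a.2.trans haz⟩, haz, hzb⟩⟩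
  obtain ⟨f⟩ := Order.iso_of_countable_dense (PairLower (Iio x)) ℚ
  obtain ⟨g⟩ := Order.iso_of_countable_dense (Ioi x) ℚ
  exact ⟨(OrderIso.sumLexIioIci x).symm.trans <| OrderIso.sumLexCongr
    ((PairLower.orderIso hpaired).symm.trans (Prod.Lex.prodLexCongr f (OrderIso.refl Bool)))
    ((OrderIso.sumLexPUnitIoi x).symm.trans (OrderIso.sumLexCongr (OrderIso.refl PUnit) g))⟩
end

section
/- Suppose T and (Tₙ)_{n∈ω} are complete consistent theories with T ≠ Tₙ for all n, but T and Tₙ prove the same ∃ₙ-sentences for every n. Then T is not boundedly axiomatizable: for no n does T have a ∀ₙ-axiomatization. -/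
open FirstOrder FirstOrder.Language

universe u v

lemma negaux {L : FirstOrder.Language.{u, v}} :
    ∀ {b : Bool} {k m : ℕ} {φ : L.BoundedFormula Empty m}, QHier b k φ →
      ∃ χ : L.BoundedFormula Empty m, QHier (!b) k χ ∧
        ∀ (M : Type (max u v)) [L.Structure M] (v : Empty → M) (xs : Fin m → M),
          χ.Realize v xs ↔ ¬ φ.Realize v xs := by
  intro b k m φ h
  induction h with
  | @qf b k m φ hqf =>
    exact ⟨φ.not, QHier.qf hqf.not, fun M _ v xs => by simp⟩
  | @ex k m φ _ ih =>
    obtain ⟨χ, hχ, he⟩ := ih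
    refine ⟨χ.all, QHier.all hχ, fun M _ v xs => ?_⟩
    simp only [BoundedFormula.realize_all, BoundedFormula.realize_ex, he]
    push_neg
    rfl
  | @all k m φ _ ih =>
    obtain ⟨χ, hχ, he⟩ := ih
    refine ⟨χ.ex, QHier.ex hχ, fun M _ v xs => ?_⟩
    simp only [BoundedFormula.realize_all, BoundedFormula.realize_ex, he]
    push_neg
    rfl
  | @dual b k m φ _ ih =>
    obtain ⟨χ, hχ, he⟩ := ih
    exact ⟨χ, QHier.dual hχ, he⟩

/-- If `T` and the complete theories `Tₙ ≠ T` prove the same `∃ₙ`-sentences for every `n`,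
then for no `n` does `T` have a `∀ₙ`-axiomatization. -/
theorem statement18 {L : FirstOrder.Language} (T : L.Theory) (Ts : ℕ → L.Theory)
    (hT : T.IsMaximal) (hTs : ∀ n, (Ts n).IsMaximal)
    (hne : ∀ n, T ≠ Ts n)
    (hagree : ∀ n, ∀ φ ∈ ExSet L n, (T ⊨ᵇ φ ↔ Ts n ⊨ᵇ φ)) :
    ∀ n, ¬ ∀ φ ∈ T, ThL (AllSet L n) T ⊨ᵇ φ := by
  intro n hax
  -- key: T and Ts n agree on ∀ₙ-sentences
  have key : ∀ ψ ∈ AllSet L n, (T ⊨ᵇ ψ ↔ Ts n ⊨ᵇ ψ) := by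
    intro ψ hψ
    obtain ⟨χ, hχ, he⟩ := negaux hψ
    have hmod : ∀ (S : L.Theory), S ⊨ᵇ χ ↔ S ⊨ᵇ ψ.not := by
      intro S
      constructor <;> intro h M v xs <;>
        have := h M v xs
      · rw [BoundedFormula.realize_not, ← he M v xs]; exact this
      · rw [he M v xs, ← BoundedFormula.realize_not]; exact this
    have h1 : T ⊨ᵇ ψ ↔ ¬ T ⊨ᵇ χ := by
      rw [hmod, hT.isComplete.models_not_iff]
      exact not_not.symm
    have h2 : Ts n ⊨ᵇ ψ ↔ ¬ Ts n ⊨ᵇ χ := by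
      rw [hmod, (hTs n).isComplete.models_not_iff]
      exact not_not.symm
    rw [h1, h2, hagree n χ hχ]
  -- hence every φ ∈ T is a consequence of Ts n
  have hTsub : ∀ φ ∈ T, Ts n ⊨ᵇ φ := by
    intro φ hφ
    have h1 := hax φ hφ
    intro M v xs
    -- M is a model of Ts n; show it models ThL (AllSet L n) T
    haveI : M ⊨ ThL (AllSet L n) T :=
      ⟨fun {ψ} hψ => ((key ψ hψ.1).1 hψ.2).realize_sentence M⟩
    exact h1 (Theory.ModelType.of _ M) v xs
  -- so T ⊆ Ts n, and by maximality T = Ts n, contradiction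
  apply hne n
  ext φ
  constructor
  · intro hφ
    exact (hTs n).mem_of_models (hTsub φ hφ)
  · intro hφ
    rcases hT.mem_or_not_mem φ with h | h
    · exact h
    · exfalso
      have h1 : Ts n ⊨ᵇ φ := Theory.models_sentence_of_mem hφ
      have h2 : Ts n ⊨ᵇ φ.not := hTsub _ h
      exact ((hTs n).isComplete.models_not_iff φ).1 h2 h1
end

section
/- Conversely, if a complete consistent theory T is not boundedly axiomatizable, then for every n there exists a complete consistent theory Tₙ ≠ T such that T and Tₙ prove the same ∃ₙ-sentences. -/
open FirstOrder FirstOrder.Language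

/-- `QHier` is monotone in the level. -/
lemma QHier.mono {L : FirstOrder.Language} {α : Type} {b : Bool} {k n : ℕ}
    {φ : L.BoundedFormula α n} (h : QHier b k φ) : QHier b (k + 1) φ := by
  induction h with
  | qf h => exact QHier.qf h
  | ex _ ih => exact QHier.ex ih
  | all _ ih => exact QHier.all ih
  | dual _ ih => exact QHier.dual ih

/-- Semantic negation lemma: the negation of a level-`k` formula is (semantically)
a level-`k` formula of the dual kind. -/
lemma QHier.neg {L : FirstOrder.Language} {α : Type} {b : Bool} {k n : ℕ}
    {φ : L.BoundedFormula α n} (h : QHier b k φ) :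
    ∃ χ : L.BoundedFormula α n, QHier (!b) k χ ∧
      ∀ (M : Type*) [L.Structure M] (v : α → M) (xs : Fin n → M),
        χ.Realize v xs ↔ ¬ φ.Realize v xs := by
  induction h with
  | @qf b k n φ h =>
      exact ⟨φ.not, QHier.qf h.not, fun M _ v xs => by simp⟩
  | @ex k n φ _ ih =>
      obtain ⟨χ, hχ, hiff⟩ := ih
      refine ⟨χ.all, QHier.all hχ, fun M _ v xs => ?_⟩
      simp only [BoundedFormula.realize_all, BoundedFormula.realize_ex, hiff]
      push_neg
      rfl
  | @all k n φ _ ih =>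
      obtain ⟨χ, hχ, hiff⟩ := ih
      refine ⟨χ.ex, QHier.ex hχ, fun M _ v xs => ?_⟩
      simp only [BoundedFormula.realize_all, BoundedFormula.realize_ex, hiff]
      push_neg
      rfl
  | @dual b k n φ _ ih =>
      obtain ⟨χ, hχ, hiff⟩ := ih
      exact ⟨χ, QHier.dual hχ, hiff⟩

/-- If a complete consistent theory `T` is not boundedly axiomatizable, then for every `n`
there is a complete consistent theory `Tₙ ≠ T` proving the same `∃ₙ`-sentences as `T`. -/
theorem statement19 {L : FirstOrder.Language} (T : L.Theory)
    (hT : T.IsMaximal)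
    (hax : ∀ n, ¬ ∀ φ ∈ T, ThL (AllSet L n) T ⊨ᵇ φ) :
    ∀ n, ∃ Tn : L.Theory, Tn.IsMaximal ∧ Tn ≠ T ∧
      ∀ φ ∈ ExSet L n, (T ⊨ᵇ φ ↔ Tn ⊨ᵇ φ) := by
  intro n
  -- use the failure of `∀_{n+1}`-axiomatizability
  have h := hax (n + 1)
  push_neg at h
  obtain ⟨φ, hφT, hφ⟩ := h
  rw [Theory.ModelsBoundedFormula] at hφ
  push_neg at hφ
  obtain ⟨M, v0, xs0, hMφ⟩ := hφ
  -- `M` is a model of all `∀_{n+1}`-consequences of `T`, but `M ⊭ φ`.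
  have hMφ' : ¬ M ⊨ φ := by
    intro hc
    apply hMφ
    have hc' : BoundedFormula.Realize φ (default : Empty → M) (default : Fin 0 → M) := hc
    convert hc' using 2
  -- every `∀_{n+1}`-consequence of `T` holds in `M`
  have hall : ∀ χ : L.Sentence, QHier false (n + 1) χ → T ⊨ᵇ χ → M ⊨ χ := by
    intro χ hχ hTχ
    have : χ ∈ ThL (AllSet L (n + 1)) T := ⟨hχ, hTχ⟩
    exact Theory.realize_sentence_of_mem (M := M) (ThL (AllSet L (n + 1)) T) this
  refine ⟨L.completeTheory M, completeTheory.isMaximal L M, ?_, ?_⟩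
  · -- `Tn ≠ T` since `φ ∈ T` but `M ⊭ φ`
    intro hEq
    apply hMφ'
    have : φ ∈ L.completeTheory M := by rw [hEq]; exact hφT
    exact mem_completeTheory.1 this
  · intro ψ hψ
    have hψ' : QHier true n ψ := hψ
    constructor
    · intro hTψ
      -- `ψ` is also a `∀_{n+1}`-sentence, so it holds in `M`
      have : QHier false (n + 1) ψ := QHier.dual hψ'
      have hMψ : M ⊨ ψ := hall ψ this hTψ
      exact Theory.models_sentence_of_mem (mem_completeTheory.2 hMψ)
    · intro hTnψ
      by_contra hTψ
      -- `T` complete: `ψ.not ∈ T`, hence `T ⊨ χ` with `χ` a `∀ₙ`-sentence equivalent to `¬ψ`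
      have hnot : ψ.not ∈ T := by
        rcases hT.mem_or_not_mem ψ with h1 | h2
        · exact absurd (Theory.models_sentence_of_mem h1) hTψ
        · exact h2
      obtain ⟨χ, hχ, hiff⟩ := QHier.neg hψ'
      have hχ' : QHier false (n + 1) χ := QHier.mono hχ
      have hTχ : T ⊨ᵇ χ := by
        rw [Theory.models_sentence_iff]
        intro N
        have hNnot : N ⊨ ψ.not := (Theory.models_sentence_of_mem hnot).realize_sentence N
        rw [Sentence.Realize, Formula.realize_not] at hNnot
        exact (hiff N default default).2 hNnot
      have hMχ : M ⊨ χ := hall χ hχ' hTχ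
      have hMψ : M ⊨ ψ := hTnψ.realize_sentence M
      exact (hiff M default default).1 hMχ hMψ
end
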